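/- arXiv:2312.08974 — 5 statements merged into one kernel-verified Lean document; each statement's English description precedes it below -/
import Mathlib

section
/- Let the IFS {S_i}_{i∈I} satisfy the SSC, let p ∈ P with p_i > 0 for all i, let w ∈ P, and let γ ∈ Ω_w. Then the local dimension of μ_p at π(γ) exists and equals H(w,p)/χ(w). -/
open MeasureTheory Metric Filter Set Topology
open scoped Classical

noncomputable section

/-- `ℝ^d` -/
abbrev Ed (d : ℕ) := EuclideanSpace ℝ (Fin d)

/-- The (topological) support of a measure. -/
def msupport {d : ℕ} (μ : Measure (Ed d)) : Set (Ed d) :=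
  {x | ∀ ε > 0, 0 < μ (ball x ε)}

/-- The set of probability vectors indexed by `ι`. -/
def probSet (ι : Type*) [Fintype ι] : Set (ι → ℝ) :=
  {p | (∀ i, 0 ≤ p i) ∧ ∑ i, p i = 1}

/-- Cross entropy `H(w,p) = Σ w_i log(1/p_i)`. -/
def crossEnt {ι : Type*} [Fintype ι] (w p : ι → ℝ) : ℝ := ∑ i, w i * Real.log (1 / p i)

/-- Entropy `H(w) = H(w,w)`. -/
def entropy {ι : Type*} [Fintype ι] (w : ι → ℝ) : ℝ := crossEnt w w

/-- Lyapunov exponent `χ(w) = Σ w_i log(1/r_i)`. -/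
def lyap {ι : Type*} [Fintype ι] (r w : ι → ℝ) : ℝ := ∑ i, w i * Real.log (1 / r i)

/-- For a finite word `w = i₁⋯iₙ`, the product `f_{i₁}⋯f_{iₙ}` (e.g. `r_𝚒` or `p_𝚒`). -/
def wprod {ι : Type*} (f : ι → ℝ) (w : List ι) : ℝ := (w.map f).prod

/-- For a finite word `w = i₁⋯iₙ`, the composition `S_{i₁} ∘ ⋯ ∘ S_{iₙ}`. -/
def Sword {ι : Type*} {d : ℕ} (S : ι → Ed d → Ed d) (w : List ι) (x : Ed d) : Ed d :=
  w.foldr (fun i y => S i y) x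

/-- The local dimension of `μ` at `x` exists and equals `α`. -/
def HasLocDim {d : ℕ} (μ : Measure (Ed d)) (x : Ed d) (α : ℝ) : Prop :=
  Tendsto (fun r : ℝ => Real.log (μ (closedBall x r)).toReal / Real.log r)
    (nhdsWithin 0 (Set.Ioi 0)) (nhds α)

/-- `G_μ(ρ,q)`: the supremum of `Σ μ(B(xᵢ,ρ))^q` over `2ρ`-separated subsets of `supp μ`. -/
def Gfun {d : ℕ} (μ : Measure (Ed d)) (ρ q : ℝ) : ℝ :=
  sSup {s | ∃ F : Finset (Ed d), (↑F : Set (Ed d)) ⊆ msupport μ ∧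
    (∀ x ∈ F, ∀ y ∈ F, x ≠ y → 2 * ρ ≤ dist x y) ∧
    s = ∑ x ∈ F, (μ (closedBall x ρ)).toReal ^ q}

/-- The `L^q`-spectrum `τ_μ(q) = liminf_{ρ→0} log G_μ(ρ,q) / log ρ`. -/
def tauLq {d : ℕ} (μ : Measure (Ed d)) (q : ℝ) : ℝ :=
  liminf (fun ρ => Real.log (Gfun μ ρ q) / Real.log ρ) (nhdsWithin 0 (Set.Ioo 0 1))

/-!
Under the strong separation condition the pieces `S_i(K)` are a positive distance `δ` apart.
Hence the self-similar measure, which is concentrated on `K`, gives the cylinder `S_u(K)` mass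
exactly `p_u`, and a ball of radius `ρ < δ r_u` around a point of `S_u(K)` meets `K` only inside
`S_u(K)`. For `δ r_{γ|n+1} ≤ ρ < δ r_{γ|n}` this squeezes `μ(B(x,ρ))` between `p_{γ|n+k+1}` and
`p_{γ|n}` for a fixed `k`. By the frequency assumption `-log p_{γ|n} / n → H(w,p)` and
`-log r_{γ|n} / n → χ(w)`, so `log μ(B(x,ρ)) / log ρ → H(w,p) / χ(w)`.
-/

section Words

variable {ι : Type*}

lemma wprod_cons (f : ι → ℝ) (i : ι) (u : List ι) : wprod f (i :: u) = f i * wprod f u := by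
  simp [wprod]

lemma wprod_append (f : ι → ℝ) (u v : List ι) : wprod f (u ++ v) = wprod f u * wprod f v := by
  simp [wprod]

lemma wprod_pos {f : ι → ℝ} (hf : ∀ i, 0 < f i) (u : List ι) : 0 < wprod f u :=
  List.prod_pos fun _ ha => by obtain ⟨i, -, rfl⟩ := List.mem_map.1 ha; exact hf i

lemma wprod_nonneg {f : ι → ℝ} (hf : ∀ i, 0 ≤ f i) (u : List ι) : 0 ≤ wprod f u :=
  List.prod_nonneg fun _ ha => by obtain ⟨i, -, rfl⟩ := List.mem_map.1 ha; exact hf i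

lemma wprod_le_pow {f : ι → ℝ} {c : ℝ} (hf : ∀ i, 0 ≤ f i) (hfc : ∀ i, f i ≤ c) (u : List ι) :
    wprod f u ≤ c ^ u.length := by
  induction u with
  | nil => simp [wprod]
  | cons i u ih =>
    rw [wprod_cons, List.length_cons, pow_succ']
    exact mul_le_mul (hfc i) ih (wprod_nonneg hf u) ((hf i).trans (hfc i))

lemma neg_log_wprod_prefix {f : ι → ℝ} (hf : ∀ i, 0 < f i) (γ : ℕ → ι) (n : ℕ) :
    -Real.log (wprod f ((List.range n).map γ)) =
      ∑ ℓ ∈ Finset.range n, Real.log (1 / f (γ ℓ)) := by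
  induction n with
  | zero => simp [wprod]
  | succ n ih =>
    rw [List.range_succ, List.map_append, wprod_append, Real.log_mul (wprod_pos hf _).ne'
      (by simp [wprod, (hf _).ne']), neg_add, ih, Finset.sum_range_succ]
    simp [wprod, Real.log_inv]

lemma wprod_prefix_add_le {f : ι → ℝ} {c : ℝ} (hf : ∀ i, 0 ≤ f i) (hfc : ∀ i, f i ≤ c)
    (γ : ℕ → ι) (n k : ℕ) :
    wprod f ((List.range (n + k)).map γ) ≤ wprod f ((List.range n).map γ) * c ^ k := by
  rw [List.range_add, List.map_append, wprod_append]
  exact mul_le_mul_of_nonneg_left ((wprod_le_pow hf hfc _).trans_eq (by simp))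
    (wprod_nonneg hf _)

lemma antitone_wprod_prefix {f : ι → ℝ} (hf0 : ∀ i, 0 ≤ f i) (hf1 : ∀ i, f i ≤ 1) (γ : ℕ → ι) :
    Antitone fun n => wprod f ((List.range n).map γ) :=
  antitone_nat_of_succ_le fun n => (wprod_prefix_add_le hf0 hf1 γ n 1).trans_eq (by simp)

lemma tendsto_wprod_prefix_zero {f : ι → ℝ} {c : ℝ} (hf : ∀ i, 0 ≤ f i) (hfc : ∀ i, f i ≤ c)
    (hc0 : 0 ≤ c) (hc1 : c < 1) (γ : ℕ → ι) :
    Tendsto (fun n => wprod f ((List.range n).map γ)) atTop (𝓝 0) :=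
  squeeze_zero (fun _ => wprod_nonneg hf _) (fun _ => (wprod_le_pow hf hfc _).trans_eq (by simp))
    (tendsto_pow_atTop_nhds_zero_of_lt_one hc0 hc1)

variable {d : ℕ} {S : ι → Ed d → Ed d}

lemma Sword_cons (S : ι → Ed d → Ed d) (i : ι) (u : List ι) (x : Ed d) :
    Sword S (i :: u) x = S i (Sword S u x) := rfl

lemma image_Sword_nil (S : ι → Ed d → Ed d) (A : Set (Ed d)) : Sword S [] '' A = A :=
  Set.image_id A

lemma image_Sword_cons (S : ι → Ed d → Ed d) (i : ι) (u : List ι) (A : Set (Ed d)) :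
    Sword S (i :: u) '' A = S i '' (Sword S u '' A) := by
  rw [Set.image_image]; rfl

lemma dist_Sword {r : ι → ℝ} (hS : ∀ i x y, dist (S i x) (S i y) = r i * dist x y)
    (u : List ι) (x y : Ed d) : dist (Sword S u x) (Sword S u y) = wprod r u * dist x y := by
  induction u with
  | nil => simp [Sword, wprod]
  | cons i u ih => rw [Sword_cons, Sword_cons, hS, ih, wprod_cons, mul_assoc]

lemma image_Sword_subset {K : Set (Ed d)} (hK : ∀ i, S i '' K ⊆ K) (u : List ι) :
    Sword S u '' K ⊆ K := by
  induction u with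
  | nil => rw [image_Sword_nil]
  | cons i u ih => rw [image_Sword_cons]; exact (Set.image_mono ih).trans (hK i)

end Words

section Frequencies

variable {ι : Type*} [Fintype ι]

lemma tendsto_birkhoff_average_of_freq {γ : ℕ → ι} {w : ι → ℝ}
    (hγ : ∀ j, Tendsto (fun n : ℕ => (((Finset.range n).filter (fun ℓ => γ ℓ = j)).card : ℝ) / n)
      atTop (𝓝 (w j))) (g : ι → ℝ) :
    Tendsto (fun n : ℕ => (∑ ℓ ∈ Finset.range n, g (γ ℓ)) / n) atTop (𝓝 (∑ j, w j * g j)) := by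
  have hsplit : ∀ n : ℕ, (∑ ℓ ∈ Finset.range n, g (γ ℓ)) / n =
      ∑ j, (((Finset.range n).filter (fun ℓ => γ ℓ = j)).card : ℝ) / n * g j := by
    intro n
    rw [← Finset.sum_fiberwise' (Finset.range n) γ g, Finset.sum_div]
    refine Finset.sum_congr rfl fun j _ => ?_
    rw [Finset.sum_const, nsmul_eq_mul]; ring
  simp only [hsplit]
  exact tendsto_finsetSum _ fun j _ => (hγ j).mul_const (g j)

lemma tendsto_neg_log_wprod_prefix_div {γ : ℕ → ι} {w : ι → ℝ}
    (hγ : ∀ j, Tendsto (fun n : ℕ => (((Finset.range n).filter (fun ℓ => γ ℓ = j)).card : ℝ) / n)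
      atTop (𝓝 (w j))) {f : ι → ℝ} (hf : ∀ i, 0 < f i) :
    Tendsto (fun n : ℕ => -Real.log (wprod f ((List.range n).map γ)) / n) atTop
      (𝓝 (∑ j, w j * Real.log (1 / f j))) := by
  simpa only [neg_log_wprod_prefix hf] using tendsto_birkhoff_average_of_freq hγ _

lemma lyap_pos {r w : ι → ℝ} (hr : ∀ i, r i ∈ Set.Ioo (0 : ℝ) 1) (hw : w ∈ probSet ι) :
    0 < lyap r w := by
  obtain ⟨hw0, hw1⟩ := hw
  obtain ⟨i, -, hi⟩ : ∃ i ∈ Finset.univ, (0 : ℝ) < w i :=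
    Finset.exists_lt_of_sum_lt (by simp [hw1])
  have hlog : ∀ j, 0 < Real.log (1 / r j) := fun j =>
    Real.log_pos (one_lt_one_div (hr j).1 (hr j).2)
  exact Finset.sum_pos' (fun j _ => mul_nonneg (hw0 j) (hlog j).le)
    ⟨i, Finset.mem_univ i, mul_pos hi (hlog i)⟩

end Frequencies

lemma tendsto_shift_div_of_tendsto_div {F : ℕ → ℝ} {L : ℝ}
    (hF : Tendsto (fun n : ℕ => F n / n) atTop (𝓝 L)) (a : ℕ) :
    Tendsto (fun n : ℕ => F (n + a) / n) atTop (𝓝 L) := by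
  have hratio : Tendsto (fun n : ℕ => ((n + a : ℕ) : ℝ) / n) atTop (𝓝 1) := by
    have h := (tendsto_const_div_atTop_nhds_zero_nat (a : ℝ)).const_add 1
    rw [add_zero] at h
    refine h.congr' ?_
    filter_upwards [eventually_ne_atTop 0] with n hn
    field_simp
    push_cast; ring
  have h := (hF.comp (tendsto_add_atTop_nat a)).mul hratio
  rw [mul_one] at h
  refine h.congr' ?_
  filter_upwards [eventually_ne_atTop 0] with n hn
  have : ((n + a : ℕ) : ℝ) ≠ 0 := by positivity
  simp only [Function.comp_apply]
  field_simp

lemma tendsto_const_add_div {F : ℕ → ℝ} {L : ℝ}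
    (hF : Tendsto (fun n : ℕ => F n / n) atTop (𝓝 L)) (c : ℝ) :
    Tendsto (fun n : ℕ => (c + F n) / n) atTop (𝓝 L) := by
  simpa only [add_div, zero_add] using (tendsto_const_div_atTop_nhds_zero_nat c).add hF

lemma tendsto_div_of_bracket {α : Type*} {l : Filter α} {N : α → ℕ} (hN : Tendsto N l atTop)
    {F : ℕ → ℝ} {L : ℝ} (hF : Tendsto (fun n : ℕ => F n / n) atTop (𝓝 L)) {f : α → ℝ} {a : ℕ}
    (hf : ∀ᶠ t in l, F (N t) ≤ f t ∧ f t ≤ F (N t + a)) :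
    Tendsto (fun t => f t / N t) l (𝓝 L) :=
  tendsto_of_tendsto_of_tendsto_of_le_of_le' (hF.comp hN)
    ((tendsto_shift_div_of_tendsto_div hF a).comp hN)
    (hf.mono fun _ ht => div_le_div_of_nonneg_right ht.1 (Nat.cast_nonneg _))
    (hf.mono fun _ ht => div_le_div_of_nonneg_right ht.2 (Nat.cast_nonneg _))

lemma exists_index_bracket {s : ℕ → ℝ} (hs0 : ∀ n, 0 < s n) (hs : Antitone s)
    (hlim : Tendsto s atTop (𝓝 0)) :
    ∃ N : ℝ → ℕ, Tendsto N (𝓝[>] 0) atTop ∧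
      ∀ ρ, 0 < ρ → ρ < s 0 → s (N ρ + 1) ≤ ρ ∧ ρ < s (N ρ) := by
  have hex : ∀ ρ : ℝ, 0 < ρ → ∃ n, s n ≤ ρ := fun ρ hρ =>
    (hlim.eventually (eventually_le_nhds hρ)).exists
  refine ⟨fun ρ => if hρ : 0 < ρ then Nat.find (hex ρ hρ) - 1 else 0, ?_, fun ρ hρ hρs => ?_⟩
  · refine tendsto_atTop.2 fun M => ?_
    filter_upwards [Ioo_mem_nhdsGT (hs0 (M + 1))] with ρ ⟨hρ, hρM⟩
    have : M + 1 < Nat.find (hex ρ hρ) := by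
      by_contra! h
      exact (Nat.find_spec (hex ρ hρ)).not_gt (hρM.trans_le (hs h))
    simp only [dif_pos hρ]
    omega
  · have hpos : 0 < Nat.find (hex ρ hρ) := Nat.pos_of_ne_zero fun h => by
      have := Nat.find_spec (hex ρ hρ); rw [h] at this; linarith
    simp only [dif_pos hρ, Nat.sub_add_cancel hpos]
    exact ⟨Nat.find_spec (hex ρ hρ), lt_of_not_ge (Nat.find_min _ (Nat.sub_lt hpos one_pos))⟩

lemma hasLocDim_of_bracket {d : ℕ} {μ : Measure (Ed d)} [IsFiniteMeasure μ] {x : Ed d}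
    {m s : ℕ → ℝ} (hm : ∀ n, 0 < m n) (hs : ∀ n, 0 < s n) {H χ : ℝ}
    (hmlim : Tendsto (fun n : ℕ => -Real.log (m n) / n) atTop (𝓝 H))
    (hslim : Tendsto (fun n : ℕ => -Real.log (s n) / n) atTop (𝓝 χ)) (hχ : χ ≠ 0)
    {N : ℝ → ℕ} (hN : Tendsto N (𝓝[>] 0) atTop) {a b : ℕ}
    (hball : ∀ᶠ ρ in 𝓝[>] 0, ENNReal.ofReal (m (N ρ + a)) ≤ μ (closedBall x ρ) ∧
      μ (closedBall x ρ) ≤ ENNReal.ofReal (m (N ρ)))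
    (hrad : ∀ᶠ ρ in 𝓝[>] 0, s (N ρ + b) ≤ ρ ∧ ρ ≤ s (N ρ)) :
    HasLocDim μ x (H / χ) := by
  have hμ := tendsto_div_of_bracket hN hmlim (hball.mono fun ρ h => by
    have hlo := (ENNReal.ofReal_le_iff_le_toReal (measure_ne_top μ _)).1 h.1
    have hhi := ENNReal.toReal_le_of_le_ofReal (hm _).le h.2
    exact ⟨neg_le_neg (Real.log_le_log ((hm _).trans_le hlo) hhi),
      neg_le_neg (Real.log_le_log (hm _) hlo)⟩)
  have hlogρ := tendsto_div_of_bracket hN hslim (hrad.mono fun ρ h =>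
    ⟨neg_le_neg (Real.log_le_log ((hs _).trans_le h.1) h.2),
      neg_le_neg (Real.log_le_log (hs _) h.1)⟩)
  refine (hμ.div hlogρ hχ).congr' ?_
  filter_upwards [hN.eventually_ne_atTop 0] with ρ hNρ
  rw [Pi.div_apply, div_div_div_cancel_right₀ (Nat.cast_ne_zero.2 hNρ), neg_div_neg_eq]

lemma injective_of_dist_eq_mul {X Y : Type*} [MetricSpace X] [MetricSpace Y] {f : X → Y} {r : ℝ}
    (hr : r ≠ 0) (hf : ∀ x y, dist (f x) (f y) = r * dist x y) : Function.Injective f :=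
  fun a b hab => dist_eq_zero.1 <|
    (mul_eq_zero.1 ((hf a b).symm.trans (by rw [hab, dist_self]))).resolve_left hr

lemma exists_pos_le_dist_of_pairwise_disjoint {X ι : Type*} [MetricSpace X] [Finite ι]
    {A : ι → Set X} (hA : ∀ i, IsCompact (A i)) (hdisj : ∀ i j, i ≠ j → Disjoint (A i) (A j)) :
    ∃ δ > 0, ∀ i j, i ≠ j → ∀ a ∈ A i, ∀ b ∈ A j, δ ≤ dist a b := by
  have hpair : ∀ i j, ∀ᶠ δ in 𝓝 (0 : ℝ), i ≠ j → ∀ a ∈ A i, ∀ b ∈ A j, δ ≤ dist a b := by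
    intro i j
    by_cases hij : i = j
    · exact Eventually.of_forall fun _ h => absurd hij h
    obtain ⟨δ, hδ, hlt⟩ := Metric.exists_pos_forall_lt_edist (hA i) (hA j).isClosed (hdisj i j hij)
    filter_upwards [eventually_lt_nhds (NNReal.coe_pos.2 hδ)] with ε hε _ a ha b hb
    rw [dist_edist]
    exact hε.le.trans (ENNReal.toReal_mono (edist_ne_top a b) (hlt a ha b hb).le)
  have hall := eventually_all.2 fun i => eventually_all.2 (hpair i)
  obtain ⟨δ, hδ, hδpos⟩ := ((hall.filter_mono nhdsWithin_le_nhds).and self_mem_nhdsWithin).exists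
    (f := 𝓝[>] (0 : ℝ))
  exact ⟨δ, hδpos, hδ⟩

lemma infDist_le_mul_infDist {X : Type*} [MetricSpace X] {K : Set X} (hKne : K.Nonempty)
    {f : X → X} (hf : f '' K ⊆ K) {c : ℝ} (hc : 0 ≤ c)
    (hfc : ∀ x y, dist (f x) (f y) ≤ c * dist x y) (z : X) :
    infDist (f z) K ≤ c * infDist z K := by
  have := hKne.to_subtype
  rw [show infDist z K = ⨅ y : K, dist z y from infDist_eq_iInf, Real.mul_iInf_of_nonneg hc]
  exact le_ciInf fun y => (infDist_le_dist_of_mem (hf ⟨y, y.2, rfl⟩)).trans (hfc z y)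

section SelfSimilarMeasure

variable {X : Type*} [MetricSpace X] [MeasurableSpace X] [BorelSpace X] {ι : Type*} [Fintype ι]
  {S : ι → X → X} {p : ι → ℝ} {μ : Measure X}

lemma measure_eq_sum_preimage (hS : ∀ i, Continuous (S i))
    (hμ : μ = ∑ i, ENNReal.ofReal (p i) • μ.map (S i)) {A : Set X} (hA : MeasurableSet A) :
    μ A = ∑ i, ENNReal.ofReal (p i) * μ (S i ⁻¹' A) := by
  conv_lhs => rw [hμ]
  simp only [Measure.coe_finsetSum, Finset.sum_apply, Measure.smul_apply, smul_eq_mul,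
    Measure.map_apply (hS _).measurable hA]

lemma measure_le_of_forall_preimage_subset [IsProbabilityMeasure μ] (hS : ∀ i, Continuous (S i))
    (hμ : μ = ∑ i, ENNReal.ofReal (p i) • μ.map (S i)) {A B : Set X} (hA : MeasurableSet A)
    (hAB : ∀ i, S i ⁻¹' A ⊆ B) : μ A ≤ μ B := by
  have hsum : ∑ i, ENNReal.ofReal (p i) = 1 := by
    simpa using (measure_eq_sum_preimage hS hμ MeasurableSet.univ).symm
  calc μ A = ∑ i, ENNReal.ofReal (p i) * μ (S i ⁻¹' A) := measure_eq_sum_preimage hS hμ hA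
    _ ≤ ∑ i, ENNReal.ofReal (p i) * μ B := by gcongr with i; exact hAB i
    _ = μ B := by rw [← Finset.sum_mul, hsum, one_mul]

/- Pulling back by `S_i` at most multiplies `infDist · K` by `c`, so the mass of
`{t < c ^ n * infDist · K}` does not decrease with `n`, while these sets shrink to `∅`. -/
lemma measure_compl_eq_zero_of_mapsTo [IsProbabilityMeasure μ] (hS : ∀ i, Continuous (S i))
    {c : ℝ} (hc0 : 0 ≤ c) (hc1 : c < 1) (hSc : ∀ i x y, dist (S i x) (S i y) ≤ c * dist x y)
    (hμ : μ = ∑ i, ENNReal.ofReal (p i) • μ.map (S i))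
    {K : Set X} (hKc : IsClosed K) (hKne : K.Nonempty) (hK : ∀ i, S i '' K ⊆ K) : μ Kᶜ = 0 := by
  let U : ℝ → ℕ → Set X := fun t n => {z | t < c ^ n * infDist z K}
  have hUmeas : ∀ t n, MeasurableSet (U t n) := fun t n =>
    measurableSet_lt measurable_const ((continuous_infDist_pt K).measurable.const_mul _)
  have hUmono : ∀ t, Monotone fun n => μ (U t n) := fun t =>
    monotone_nat_of_le_succ fun n => measure_le_of_forall_preimage_subset hS hμ (hUmeas t n)
      fun i z (hz : t < c ^ n * infDist (S i z) K) => show t < c ^ (n + 1) * infDist z K from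
        hz.trans_le (by
          rw [pow_succ, mul_assoc]
          exact mul_le_mul_of_nonneg_left (infDist_le_mul_infDist hKne (hK i) hc0 (hSc i) z)
            (pow_nonneg hc0 n))
  have hUanti : ∀ t, Antitone (U t) := fun t => antitone_nat_of_succ_le fun n z
    (hz : t < c ^ (n + 1) * infDist z K) => show t < c ^ n * infDist z K from
      hz.trans_le (mul_le_mul_of_nonneg_right (pow_le_pow_of_le_one hc0 hc1.le n.le_succ)
        infDist_nonneg)
  have hnull : ∀ t, 0 < t → μ (U t 0) = 0 := by
    intro t ht
    have hempty : ⋂ n, U t n = ∅ := Set.eq_empty_of_forall_notMem fun z hz => by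
      have hlim : Tendsto (fun n => c ^ n * infDist z K) atTop (𝓝 0) := by
        simpa using (tendsto_pow_atTop_nhds_zero_of_lt_one hc0 hc1).mul_const (infDist z K)
      obtain ⟨n, hn⟩ := (hlim.eventually (eventually_lt_nhds ht)).exists
      exact (Set.mem_iInter.1 hz n).not_gt hn
    refine le_antisymm ?_ zero_le
    calc μ (U t 0) ≤ ⨅ n, μ (U t n) := le_iInf fun n => hUmono t n.zero_le
      _ = 0 := by
        rw [← (hUanti t).measure_iInter (fun n => (hUmeas t n).nullMeasurableSet)
          ⟨0, measure_ne_top μ _⟩, hempty, measure_empty]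
  refine measure_mono_null (fun z hz => ?_) (measure_iUnion_null fun n : ℕ =>
    hnull (1 / (n + 1)) Nat.one_div_pos_of_nat)
  obtain ⟨n, hn⟩ := exists_nat_one_div_lt ((hKc.notMem_iff_infDist_pos hKne).1 hz)
  exact Set.mem_iUnion.2 ⟨n, show 1 / ((n : ℝ) + 1) < 1 * infDist z K by rwa [one_mul]⟩

lemma measure_image_eq_mul (hS : ∀ i, Continuous (S i)) (hinj : ∀ i, Function.Injective (S i))
    (hμ : μ = ∑ i, ENNReal.ofReal (p i) • μ.map (S i)) {K : Set X} (hK : μ Kᶜ = 0)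
    (hSSC : ∀ i j, i ≠ j → Disjoint (S i '' K) (S j '' K))
    {A : Set X} (hAc : IsCompact A) (hAK : A ⊆ K) (i : ι) :
    μ (S i '' A) = ENNReal.ofReal (p i) * μ A := by
  rw [measure_eq_sum_preimage hS hμ (hAc.image (hS i)).isClosed.measurableSet,
    Finset.sum_eq_single_of_mem i (Finset.mem_univ i), Set.preimage_image_eq A (hinj i)]
  intro j _ hji
  refine mul_eq_zero_of_right _ (measure_mono_null (fun z hz => Set.mem_compl fun hzK => ?_) hK)
  obtain ⟨a, ha, haz⟩ := hz
  exact (hSSC i j hji.symm).ne_of_mem ⟨a, hAK ha, haz⟩ ⟨z, hzK, rfl⟩ rfl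

end SelfSimilarMeasure

section Cylinders

variable {ι : Type*} {d : ℕ} {S : ι → Ed d → Ed d} {r : ι → ℝ}

lemma isCompact_image_Sword (hS : ∀ i, Continuous (S i)) {K : Set (Ed d)} (hK : IsCompact K)
    (u : List ι) : IsCompact (Sword S u '' K) := by
  induction u with
  | nil => rwa [image_Sword_nil]
  | cons i u ih => rw [image_Sword_cons]; exact ih.image (hS i)

lemma measure_image_Sword [Fintype ι] (hS : ∀ i, Continuous (S i))
    (hinj : ∀ i, Function.Injective (S i)) {p : ι → ℝ} (hp : ∀ i, 0 ≤ p i)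
    {μ : Measure (Ed d)} (hμ : μ = ∑ i, ENNReal.ofReal (p i) • μ.map (S i))
    [IsProbabilityMeasure μ] {K : Set (Ed d)} (hKc : IsCompact K) (hK : ∀ i, S i '' K ⊆ K)
    (hKcompl : μ Kᶜ = 0) (hSSC : ∀ i j, i ≠ j → Disjoint (S i '' K) (S j '' K)) (u : List ι) :
    μ (Sword S u '' K) = ENNReal.ofReal (wprod p u) := by
  induction u with
  | nil =>
    rw [image_Sword_nil, wprod, List.map_nil, List.prod_nil, ENNReal.ofReal_one]
    exact (prob_compl_eq_zero_iff hKc.isClosed.measurableSet).1 hKcompl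
  | cons i u ih =>
    rw [image_Sword_cons, measure_image_eq_mul hS hinj hμ hKcompl hSSC
      (isCompact_image_Sword hS hKc u) (image_Sword_subset hK u), ih, wprod_cons,
      ENNReal.ofReal_mul (hp i)]

lemma image_Sword_subset_closedBall (hS : ∀ i x y, dist (S i x) (S i y) = r i * dist x y)
    (hr : ∀ i, 0 ≤ r i) {K : Set (Ed d)} (hK : Bornology.IsBounded K) {u : List ι} {x : Ed d}
    (hx : x ∈ Sword S u '' K) {ρ : ℝ} (hρ : wprod r u * diam K ≤ ρ) :
    Sword S u '' K ⊆ closedBall x ρ := by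
  rintro _ ⟨a, ha, rfl⟩
  obtain ⟨b, hb, rfl⟩ := hx
  rw [mem_closedBall, dist_Sword hS]
  exact (mul_le_mul_of_nonneg_left (dist_le_diam_of_mem hK ha hb)
    (wprod_nonneg hr u)).trans hρ

lemma mem_image_Sword_of_dist_lt (hS : ∀ i x y, dist (S i x) (S i y) = r i * dist x y)
    (hr : ∀ i, r i ∈ Set.Ioo (0 : ℝ) 1) {K : Set (Ed d)} (hKcov : K ⊆ ⋃ i, S i '' K)
    (hK : ∀ i, S i '' K ⊆ K) {δ : ℝ}
    (hsep : ∀ i j, i ≠ j → ∀ a ∈ S i '' K, ∀ b ∈ S j '' K, δ ≤ dist a b) (u : List ι) :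
    ∀ x ∈ Sword S u '' K, ∀ y ∈ K, dist y x < δ * wprod r u → y ∈ Sword S u '' K := by
  induction u with
  | nil => exact fun _ _ y hy _ => ⟨y, hy, rfl⟩
  | cons i u ih =>
    intro x hx y hy hyx
    rw [image_Sword_cons] at hx ⊢
    obtain ⟨x', hx', rfl⟩ := hx
    obtain ⟨j, y', hy', rfl⟩ := Set.mem_iUnion.1 (hKcov hy)
    obtain rfl | hji := eq_or_ne j i
    · rw [hS, wprod_cons, mul_left_comm] at hyx
      exact Set.mem_image_of_mem _ (ih x' hx' y' hy' (lt_of_mul_lt_mul_left hyx (hr j).1.le))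
    · have hru : wprod r (i :: u) ≤ 1 := by
        simpa using wprod_le_pow (fun k => (hr k).1.le) (fun k => (hr k).2.le) (i :: u)
      have := hsep j i hji _ ⟨y', hy', rfl⟩ _ ⟨x', image_Sword_subset hK u hx', rfl⟩
      nlinarith [wprod_nonneg (fun k => (hr k).1.le) (i :: u),
        dist_nonneg (x := S j y') (y := S i x')]

lemma measure_closedBall_bracket (hS : ∀ i x y, dist (S i x) (S i y) = r i * dist x y)
    (hr : ∀ i, r i ∈ Set.Ioo (0 : ℝ) 1) {c : ℝ} (hrc : ∀ i, r i ≤ c) {K : Set (Ed d)}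
    (hKb : Bornology.IsBounded K) (hKcov : K ⊆ ⋃ i, S i '' K) (hK : ∀ i, S i '' K ⊆ K) {δ : ℝ}
    (hsep : ∀ i j, i ≠ j → ∀ a ∈ S i '' K, ∀ b ∈ S j '' K, δ ≤ dist a b) {k : ℕ}
    (hk : c ^ k * diam K ≤ δ) {μ : Measure (Ed d)} (hKcompl : μ Kᶜ = 0) {γ : ℕ → ι} {x : Ed d}
    (hx : ∀ n, x ∈ Sword S ((List.range n).map γ) '' K) {n : ℕ} {ρ : ℝ}
    (hρ : δ * wprod r ((List.range (n + 1)).map γ) ≤ ρ ∧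
      ρ < δ * wprod r ((List.range n).map γ)) :
    μ (Sword S ((List.range (n + (k + 1))).map γ) '' K) ≤ μ (closedBall x ρ) ∧
      μ (closedBall x ρ) ≤ μ (Sword S ((List.range n).map γ) '' K) := by
  have hr0 : ∀ i, 0 ≤ r i := fun i => (hr i).1.le
  refine ⟨measure_mono (image_Sword_subset_closedBall hS hr0 hKb (hx _) ?_),
    measure_mono_ae (ae_le_set.2
      (measure_mono_null (fun z hz => Set.mem_compl fun hzK => ?_) hKcompl))⟩
  · rw [add_comm k 1, ← add_assoc]
    calc wprod r ((List.range (n + 1 + k)).map γ) * diam K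
        ≤ wprod r ((List.range (n + 1)).map γ) * c ^ k * diam K :=
          mul_le_mul_of_nonneg_right (wprod_prefix_add_le hr0 hrc γ _ k) diam_nonneg
      _ ≤ δ * wprod r ((List.range (n + 1)).map γ) := by
          rw [mul_assoc, mul_comm δ]
          exact mul_le_mul_of_nonneg_left hk (wprod_nonneg hr0 _)
      _ ≤ ρ := hρ.1
  · exact hz.2 (mem_image_Sword_of_dist_lt hS hr hKcov hK hsep _ x (hx n) z hzK
      ((mem_closedBall.1 hz.1).trans_lt hρ.2))

end Cylinders

lemma hasLocDim_of_cylinder_bracket {ι : Type*} [Fintype ι] {d : ℕ} {μ : Measure (Ed d)}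
    [IsFiniteMeasure μ] {x : Ed d} {r p w : ι → ℝ} (hr : ∀ i, r i ∈ Set.Ioo (0 : ℝ) 1) {c : ℝ}
    (hrc : ∀ i, r i ≤ c) (hc0 : 0 ≤ c) (hc1 : c < 1) (hp : ∀ i, 0 < p i) (hw : w ∈ probSet ι)
    {γ : ℕ → ι}
    (hγ : ∀ j, Tendsto (fun n : ℕ => (((Finset.range n).filter (fun ℓ => γ ℓ = j)).card : ℝ) / n)
      atTop (𝓝 (w j))) {δ : ℝ} (hδ : 0 < δ) (k : ℕ)
    (hball : ∀ n ρ, δ * wprod r ((List.range (n + 1)).map γ) ≤ ρ →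
      ρ < δ * wprod r ((List.range n).map γ) →
      ENNReal.ofReal (wprod p ((List.range (n + (k + 1))).map γ)) ≤ μ (closedBall x ρ) ∧
        μ (closedBall x ρ) ≤ ENNReal.ofReal (wprod p ((List.range n).map γ))) :
    HasLocDim μ x (crossEnt w p / lyap r w) := by
  have hr0 : ∀ i, 0 < r i := fun i => (hr i).1
  set s : ℕ → ℝ := fun n => δ * wprod r ((List.range n).map γ)
  have hs0 : ∀ n, 0 < s n := fun n => mul_pos hδ (wprod_pos hr0 _)
  obtain ⟨N, hN, hNρ⟩ := exists_index_bracket hs0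
    ((antitone_wprod_prefix (fun i => (hr0 i).le) (fun i => (hr i).2.le) γ).const_mul hδ.le)
    (by simpa using (tendsto_wprod_prefix_zero (fun i => (hr0 i).le) hrc hc0 hc1 γ).const_mul δ)
  have hslim : Tendsto (fun n : ℕ => -Real.log (s n) / n) atTop (𝓝 (lyap r w)) :=
    (tendsto_const_add_div (tendsto_neg_log_wprod_prefix_div hγ hr0) (-Real.log δ)).congr
      fun n => by rw [Real.log_mul hδ.ne' (wprod_pos hr0 _).ne', neg_add]
  refine hasLocDim_of_bracket (a := k + 1) (b := 1) (fun n => wprod_pos hp _) hs0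
    (tendsto_neg_log_wprod_prefix_div hγ hp) hslim (lyap_pos hr hw).ne' hN ?_ ?_ <;>
  filter_upwards [Ioo_mem_nhdsGT (hs0 0)] with ρ hρ
  · exact hball _ ρ (hNρ ρ hρ.1 hρ.2).1 (hNρ ρ hρ.1 hρ.2).2
  · exact ⟨(hNρ ρ hρ.1 hρ.2).1, (hNρ ρ hρ.1 hρ.2).2.le⟩

/-- `x = π(γ)` is characterized by membership in `S_{γ|n}(K)` for every `n`. -/
theorem stmt_1_general {d : ℕ} {ι : Type} [Fintype ι] [Nonempty ι]
    (S : ι → Ed d → Ed d) (r : ι → ℝ) (hr : ∀ i, r i ∈ Set.Ioo (0:ℝ) 1)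
    (hS : ∀ i x y, dist (S i x) (S i y) = r i * dist x y)
    (K : Set (Ed d)) (hKc : IsCompact K) (hKne : K.Nonempty)
    (hKinv : K = ⋃ i, S i '' K)
    (hSSC : ∀ i j, i ≠ j → Disjoint (S i '' K) (S j '' K))
    (p : ι → ℝ) (hp : ∀ i, 0 < p i)
    (μ : Measure (Ed d)) [IsProbabilityMeasure μ]
    (hμ : μ = ∑ i, ENNReal.ofReal (p i) • μ.map (S i))
    (w : ι → ℝ) (hw : w ∈ probSet ι)
    (γ : ℕ → ι)
    (hγ : ∀ j : ι, Tendsto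
      (fun n : ℕ => (((Finset.range n).filter (fun ℓ => γ ℓ = j)).card : ℝ) / n)
      atTop (nhds (w j)))
    (x : Ed d) (hx : ∀ n : ℕ, x ∈ Sword S ((List.range n).map γ) '' K) :
    HasLocDim μ x (crossEnt w p / lyap r w) := by
  have hScont : ∀ i, Continuous (S i) := fun i =>
    (LipschitzWith.of_dist_le' fun x y => (hS i x y).le).continuous
  have hK : ∀ i, S i '' K ⊆ K := fun i =>
    (Set.subset_iUnion (fun j => S j '' K) i).trans hKinv.symm.subset
  obtain ⟨i₀, -, hi₀⟩ := Finset.exists_max_image Finset.univ r Finset.univ_nonempty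
  have hrc : ∀ i, r i ≤ r i₀ := fun i => hi₀ i (Finset.mem_univ i)
  have hKcompl : μ Kᶜ = 0 := measure_compl_eq_zero_of_mapsTo hScont (hr i₀).1.le (hr i₀).2
    (fun i x y => (hS i x y).trans_le (mul_le_mul_of_nonneg_right (hrc i) dist_nonneg)) hμ
    hKc.isClosed hKne hK
  have hcyl : ∀ u, μ (Sword S u '' K) = ENNReal.ofReal (wprod p u) :=
    measure_image_Sword hScont (fun i => injective_of_dist_eq_mul (hr i).1.ne' (hS i))
      (fun i => (hp i).le) hμ hKc hK hKcompl hSSC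
  obtain ⟨δ, hδ, hsep⟩ :=
    exists_pos_le_dist_of_pairwise_disjoint (fun i => hKc.image (hScont i)) hSSC
  obtain ⟨k, hk⟩ : ∃ k : ℕ, r i₀ ^ k * diam K ≤ δ := by
    have := (tendsto_pow_atTop_nhds_zero_of_lt_one (hr i₀).1.le (hr i₀).2).mul_const (diam K)
    rw [zero_mul] at this
    exact (this.eventually (eventually_le_nhds hδ)).exists
  refine hasLocDim_of_cylinder_bracket hr hrc (hr i₀).1.le (hr i₀).2 hp hw hγ hδ k
    fun n ρ hρ₁ hρ₂ => ?_
  rw [← hcyl, ← hcyl]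
  exact measure_closedBall_bracket hS hr hrc hKc.isBounded hKinv.subset hK hsep hk hKcompl hx
    ⟨hρ₁, hρ₂⟩

/-- under the SSC, if `γ ∈ Ω_w` then the local dimension of `μ_p`
at `π(γ)` exists and equals `H(w,p)/χ(w)`. Here `x = π(γ)` is characterized by
membership in `S_{γ|n}(K)` for every `n`. -/
theorem stmt_1 {d : ℕ} (hd : 1 ≤ d) {ι : Type} [Fintype ι] [Nonempty ι]
    (S : ι → Ed d → Ed d) (r : ι → ℝ) (hr : ∀ i, r i ∈ Set.Ioo (0:ℝ) 1)
    (hS : ∀ i x y, dist (S i x) (S i y) = r i * dist x y)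
    (K : Set (Ed d)) (hKc : IsCompact K) (hKne : K.Nonempty)
    (hKinv : K = ⋃ i, S i '' K)
    (hSSC : ∀ i j, i ≠ j → Disjoint (S i '' K) (S j '' K))
    (p : ι → ℝ) (hp : ∀ i, 0 < p i) (hp1 : ∑ i, p i = 1)
    (μ : Measure (Ed d)) [IsProbabilityMeasure μ]
    (hμ : μ = ∑ i, ENNReal.ofReal (p i) • μ.map (S i))
    (w : ι → ℝ) (hw : w ∈ probSet ι)
    (γ : ℕ → ι)
    (hγ : ∀ j : ι, Tendsto
      (fun n : ℕ => (((Finset.range n).filter (fun ℓ => γ ℓ = j)).card : ℝ) / n)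
      atTop (nhds (w j)))
    (x : Ed d) (hx : ∀ n : ℕ, x ∈ Sword S ((List.range n).map γ) '' K) :
    HasLocDim μ x (crossEnt w p / lyap r w) :=
  stmt_1_general S r hr hS K hKc hKne hKinv hSSC p hp μ hμ w hw γ hγ x hx
end
end

section
/- Let p be a probability vector with p_i > 0 for all i ∈ I and fix q ∈ ℝ. Let T(q) be the unique real number with Σ_{i∈I} p_i^q r_i^{−T(q)} = 1 and let z(q) = (p_i^q r_i^{−T(q)})_{i∈I} ∈ P. Then for every w ∈ P, (q·H(w,p) − H(w))/χ(w) = T(q) + D(w‖z(q))/χ(w). Consequently, the infimum inf_{w∈P} (q·H(w,p) − H(w))/χ(w) equals T(q) and is attained uniquely at w = z(q). -/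
open MeasureTheory Metric Filter Set Topology
open scoped Classical

noncomputable section

/-- Pointwise Gibbs term inequality. -/
lemma gibbs_term (a b : ℝ) (ha : 0 ≤ a) (hb : 0 < b) :
    a - b ≤ a * (Real.log a - Real.log b) ∧
    (a * (Real.log a - Real.log b) = a - b → a = b) := by
  rcases eq_or_lt_of_le ha with h0 | h0
  · constructor
    · simp [← h0]; linarith
    · intro h; simp [← h0] at h; linarith
  · have hx : 0 < b / a := div_pos hb h0
    have hle : Real.log (b / a) ≤ b / a - 1 := Real.log_le_sub_one_of_pos hx
    have hlog : Real.log (b / a) = Real.log b - Real.log a := Real.log_div hb.ne' h0.ne'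
    constructor
    · have := mul_le_mul_of_nonneg_left hle h0.le
      rw [hlog] at this
      have hba : a * (b / a - 1) = b - a := by field_simp
      nlinarith
    · intro h
      by_contra hne
      have hx1 : b / a ≠ 1 := by
        intro h1; apply hne; field_simp at h1; linarith
      have hlt : Real.log (b / a) < b / a - 1 := Real.log_lt_sub_one_of_pos hx hx1
      rw [hlog] at hlt
      have := mul_lt_mul_of_pos_left hlt h0
      have hba : a * (b / a - 1) = b - a := by field_simp
      nlinarith

/-- Gibbs' inequality with equality case, for finite probability vectors. -/
lemma gibbs_sum {ι : Type} [Fintype ι] (w z : ι → ℝ)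
    (hw : ∀ i, 0 ≤ w i) (hw1 : ∑ i, w i = 1)
    (hz : ∀ i, 0 < z i) (hz1 : ∑ i, z i = 1) :
    0 ≤ ∑ i, w i * (Real.log (w i) - Real.log (z i)) ∧
    (∑ i, w i * (Real.log (w i) - Real.log (z i)) = 0 → w = z) := by
  have hterm : ∀ i ∈ Finset.univ, w i - z i ≤ w i * (Real.log (w i) - Real.log (z i)) :=
    fun i _ => (gibbs_term (w i) (z i) (hw i) (hz i)).1
  have hsum : ∑ i, (w i - z i) ≤ ∑ i, w i * (Real.log (w i) - Real.log (z i)) :=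
    Finset.sum_le_sum hterm
  have hzero : ∑ i, (w i - z i) = 0 := by rw [Finset.sum_sub_distrib, hw1, hz1]; ring
  constructor
  · linarith
  · intro h
    have heq : ∀ i ∈ Finset.univ, w i - z i = w i * (Real.log (w i) - Real.log (z i)) :=
      (Finset.sum_eq_sum_iff_of_le hterm).1 (by rw [h, hzero])
    funext i
    exact (gibbs_term (w i) (z i) (hw i) (hz i)).2 ((heq i (Finset.mem_univ i)).symm)

/-- if `Σ_i p_i^q r_i^{−T} = 1` and `z_i = p_i^q r_i^{−T}`, then for every
probability vector `w`, `(q·H(w,p) − H(w))/χ(w) = T + D(w‖z)/χ(w)`; consequently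
`inf_{w∈P} (q·H(w,p) − H(w))/χ(w) = T`, attained uniquely at `w = z`. -/
theorem stmt_8 {ι : Type} [Fintype ι] [Nonempty ι]
    (r : ι → ℝ) (hr : ∀ i, r i ∈ Set.Ioo (0:ℝ) 1)
    (p : ι → ℝ) (hp : ∀ i, 0 < p i) (hp1 : ∑ i, p i = 1)
    (q T : ℝ) (hT : ∑ i, p i ^ q * r i ^ (-T) = 1)
    (z : ι → ℝ) (hz : ∀ i, z i = p i ^ q * r i ^ (-T)) :
    (∀ w ∈ probSet ι,
      (q * crossEnt w p - entropy w) / lyap r w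
        = T + (crossEnt w z - entropy w) / lyap r w) ∧
    sInf ((fun w => (q * crossEnt w p - entropy w) / lyap r w) '' probSet ι) = T ∧
    z ∈ probSet ι ∧
    (q * crossEnt z p - entropy z) / lyap r z = T ∧
    (∀ w ∈ probSet ι, (q * crossEnt w p - entropy w) / lyap r w = T → w = z) := by
  have hzpos : ∀ i, 0 < z i := by
    intro i; rw [hz i]
    exact mul_pos (Real.rpow_pos_of_pos (hp i) q) (Real.rpow_pos_of_pos (hr i).1 (-T))
  have hz1 : ∑ i, z i = 1 := by
    rw [← hT]; exact Finset.sum_congr rfl fun i _ => hz i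
  have hzP : z ∈ probSet ι := ⟨fun i => (hzpos i).le, hz1⟩
  have hlogz : ∀ i, Real.log (z i) = q * Real.log (p i) - T * Real.log (r i) := by
    intro i
    rw [hz i, Real.log_mul (Real.rpow_pos_of_pos (hp i) q).ne'
        (Real.rpow_pos_of_pos (hr i).1 (-T)).ne',
      Real.log_rpow (hp i), Real.log_rpow (hr i).1]
    ring
  have key : ∀ w : ι → ℝ, crossEnt w z = q * crossEnt w p - T * lyap r w := by
    intro w
    simp only [crossEnt, lyap, one_div, Real.log_inv, Finset.mul_sum,
      ← Finset.sum_sub_distrib]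
    exact Finset.sum_congr rfl fun i _ => by rw [hlogz i]; ring
  have hχ : ∀ w ∈ probSet ι, 0 < lyap r w := by
    rintro w ⟨hw0, hw1⟩
    obtain ⟨i, hi⟩ : ∃ i, w i ≠ 0 := by
      by_contra h; push_neg at h; simp [h] at hw1
    have hlogr : ∀ j, 0 < Real.log (1 / r j) := by
      intro j
      rw [one_div, Real.log_inv]
      linarith [Real.log_neg (hr j).1 (hr j).2]
    refine Finset.sum_pos' (fun j _ => mul_nonneg (hw0 j) (hlogr j).le)
      ⟨i, Finset.mem_univ i, mul_pos ((hw0 i).lt_of_ne' hi) (hlogr i)⟩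
  -- KL divergence as Gibbs sum
  have hKL : ∀ w : ι → ℝ, crossEnt w z - entropy w
      = ∑ i, w i * (Real.log (w i) - Real.log (z i)) := by
    intro w
    simp only [crossEnt, entropy, one_div, Real.log_inv, ← Finset.sum_sub_distrib]
    exact Finset.sum_congr rfl fun i _ => by ring
  have hD : ∀ w ∈ probSet ι, 0 ≤ crossEnt w z - entropy w := by
    rintro w ⟨hw0, hw1⟩
    rw [hKL w]
    exact (gibbs_sum w z hw0 hw1 hzpos hz1).1
  have hDeq : ∀ w ∈ probSet ι, crossEnt w z - entropy w = 0 → w = z := by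
    rintro w ⟨hw0, hw1⟩ h
    rw [hKL w] at h
    exact (gibbs_sum w z hw0 hw1 hzpos hz1).2 h
  have hmain : ∀ w ∈ probSet ι,
      (q * crossEnt w p - entropy w) / lyap r w
        = T + (crossEnt w z - entropy w) / lyap r w := by
    intro w hw
    have hχw := (hχ w hw).ne'
    rw [key w]
    field_simp
    ring
  have hvalz : (q * crossEnt z p - entropy z) / lyap r z = T := by
    rw [hmain z hzP]
    simp [entropy]
  refine ⟨hmain, ?_, hzP, hvalz, ?_⟩
  · have hlb : ∀ x ∈ (fun w => (q * crossEnt w p - entropy w) / lyap r w) '' probSet ι,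
        T ≤ x := by
      rintro x ⟨w, hw, rfl⟩
      simp only []
      rw [hmain w hw]
      exact le_add_of_nonneg_right (div_nonneg (hD w hw) (hχ w hw).le)
    exact le_antisymm (csInf_le ⟨T, hlb⟩ ⟨z, hzP, hvalz⟩)
      (le_csInf ⟨T, z, hzP, hvalz⟩ hlb)
  · intro w hw h
    rw [hmain w hw] at h
    have : (crossEnt w z - entropy w) / lyap r w = 0 := by linarith
    exact hDeq w hw (by
      have := (div_eq_zero_iff.1 this)
      rcases this with h' | h'
      · exact h'
      · exact absurd h' (hχ w hw).ne')
end
end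

section
/- Let p be a probability vector with p_i > 0 for all i ∈ I. For i ∈ I set κ_i = log p_i / log r_i, and let κ_min = min_i κ_i, κ_max = max_i κ_i. Let s_min be the unique real solution of Σ_{i : κ_i = κ_min} r_i^{s} = 1 and s_max the unique real solution of Σ_{i : κ_i = κ_max} r_i^{s} = 1. Let T(q) be the unique real with Σ_i p_i^q r_i^{−T(q)} = 1 and z(q) = (p_i^q r_i^{−T(q)})_{i∈I}. Then: lim_{q→∞}(q·κ_min − T(q)) = s_min and lim_{q→−∞}(q·κ_max − T(q)) = s_max; moreover lim_{q→∞} z_i(q) = r_i^{s_min} if κ_i = κ_min and 0 otherwise, and lim_{q→−∞} z_i(q) = r_i^{s_max} if κ_i = κ_max and 0 otherwise. -/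
open MeasureTheory Metric Filter Set Topology
open scoped Classical

noncomputable section

lemma aux_tendsto {ι : Type} [Fintype ι] (r : ι → ℝ) (hr : ∀ i, r i ∈ Set.Ioo (0:ℝ) 1)
    (κ : ι → ℝ) (κmin : ℝ) (hκmin : IsLeast (Set.range κ) κmin)
    (smin : ℝ)
    (hsmin : ∑ i ∈ Finset.univ.filter (fun i => κ i = κmin), r i ^ smin = 1)
    (s : ℝ → ℝ)
    (hs : ∀ q, ∑ i, r i ^ (q * (κ i - κmin) + s q) = 1) :
    Tendsto s atTop (nhds smin) ∧
    ∀ i, Tendsto (fun q => r i ^ (q * (κ i - κmin) + s q)) atTop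
      (nhds (if κ i = κmin then r i ^ smin else 0)) := by
  set A := Finset.univ.filter (fun i => κ i = κmin) with hAdef
  obtain ⟨i0, hi0⟩ := hκmin.1
  have hA : A.Nonempty := ⟨i0, by simp [hAdef, hi0]⟩
  have hmono : ∀ t u : ℝ, t < u → ∑ i ∈ A, r i ^ u < ∑ i ∈ A, r i ^ t :=
    fun t u h => Finset.sum_lt_sum_of_nonempty hA
      (fun i _ => Real.rpow_lt_rpow_of_exponent_gt (hr i).1 (hr i).2 h)
  have hpos : ∀ i, ∀ x : ℝ, (0:ℝ) ≤ r i ^ x := fun i x => Real.rpow_nonneg (hr i).1.le x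
  have hgap : ∀ i, κ i ≠ κmin → 0 < κ i - κmin := by
    intro i hne
    have h1 : κmin ≤ κ i := hκmin.2 ⟨i, rfl⟩
    have : κmin < κ i := lt_of_le_of_ne h1 (Ne.symm hne)
    linarith
  have hAsum : ∀ q t : ℝ, ∑ i ∈ A, r i ^ (q * (κ i - κmin) + t) = ∑ i ∈ A, r i ^ t := by
    intro q t
    refine Finset.sum_congr rfl fun i hi => ?_
    have : κ i = κmin := by simpa [hAdef] using hi
    rw [this]; ring_nf
  have hlow : ∀ q, smin ≤ s q := by
    intro q
    by_contra h
    push_neg at h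
    have h1 : (1:ℝ) < ∑ i ∈ A, r i ^ (s q) := hsmin ▸ hmono _ _ h
    have h2 : ∑ i ∈ A, r i ^ (s q) ≤ 1 := by
      rw [← hs q, ← hAsum q (s q)]
      exact Finset.sum_le_sum_of_subset_of_nonneg (Finset.subset_univ A)
        (fun i _ _ => hpos i _)
    linarith
  have hupp : ∀ ε > (0:ℝ), ∀ᶠ q in atTop, s q < smin + ε := by
    intro ε hε
    have hδ : ∑ i ∈ A, r i ^ (smin + ε) < 1 := hsmin ▸ hmono smin (smin + ε) (by linarith)
    have hB : Tendsto (fun q => ∑ i ∈ Aᶜ, r i ^ (q * (κ i - κmin) + (smin + ε)))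
        atTop (nhds 0) := by
      have h0 : (0:ℝ) = ∑ i ∈ Aᶜ, (0:ℝ) := by simp
      rw [h0]
      refine tendsto_finset_sum _ fun i hi => ?_
      have hne : κ i ≠ κmin := by simpa [hAdef] using hi
      have hexp : Tendsto (fun q : ℝ => q * (κ i - κmin) + (smin + ε)) atTop atTop :=
        tendsto_atTop_add_const_right _ _ (tendsto_id.atTop_mul_const (hgap i hne))
      exact (tendsto_rpow_atTop_of_base_lt_one (r i)
        (by linarith [(hr i).1]) (hr i).2).comp hexp
    have hev : ∀ᶠ q in atTop,
        ∑ i ∈ Aᶜ, r i ^ (q * (κ i - κmin) + (smin + ε)) < 1 - ∑ i ∈ A, r i ^ (smin + ε) :=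
      hB.eventually (eventually_lt_nhds (by linarith))
    filter_upwards [hev] with q hq
    by_contra h
    push_neg at h
    have h1 : (1:ℝ) = ∑ i, r i ^ (q * (κ i - κmin) + s q) := (hs q).symm
    have hle : ∑ i, r i ^ (q * (κ i - κmin) + s q)
        ≤ ∑ i, r i ^ (q * (κ i - κmin) + (smin + ε)) :=
      Finset.sum_le_sum fun i _ =>
        Real.rpow_le_rpow_of_exponent_ge (hr i).1 (hr i).2.le (by linarith)
    have hsplit : ∑ i, r i ^ (q * (κ i - κmin) + (smin + ε))
        = ∑ i ∈ A, r i ^ (smin + ε) + ∑ i ∈ Aᶜ, r i ^ (q * (κ i - κmin) + (smin + ε)) := by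
      rw [← hAsum q (smin + ε), ← Finset.sum_add_sum_compl A]
    rw [hsplit] at hle
    linarith
  have hts : Tendsto s atTop (nhds smin) := by
    rw [Metric.tendsto_nhds]
    intro ε hε
    filter_upwards [hupp ε hε] with q hq
    rw [Real.dist_eq, abs_lt]
    constructor
    · linarith [hlow q]
    · linarith
  refine ⟨hts, fun i => ?_⟩
  by_cases hi : κ i = κmin
  · have heq : (fun q => r i ^ (q * (κ i - κmin) + s q)) = fun q => r i ^ (s q) := by
      funext q; rw [hi]; ring_nf
    rw [heq, if_pos hi]
    exact Filter.Tendsto.rpow tendsto_const_nhds hts (Or.inl (hr i).1.ne')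
  · rw [if_neg hi]
    have hc := hgap i hi
    have hexp : Tendsto (fun q : ℝ => q * (κ i - κmin) + s q) atTop atTop := by
      refine tendsto_atTop_mono (fun q => ?_)
        (tendsto_atTop_add_const_right _ smin (tendsto_id.atTop_mul_const hc))
      have := hlow q
      simp only [id]
      linarith
    exact (tendsto_rpow_atTop_of_base_lt_one (r i)
      (by linarith [(hr i).1]) (hr i).2).comp hexp

/-- asymptotics of `T(q)` and of the optimizing vector `z(q)` as `q → ±∞`. -/
theorem stmt_9 {ι : Type} [Fintype ι] [Nonempty ι]
    (r : ι → ℝ) (hr : ∀ i, r i ∈ Set.Ioo (0:ℝ) 1)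
    (p : ι → ℝ) (hp : ∀ i, 0 < p i) (hp1 : ∑ i, p i = 1)
    (κ : ι → ℝ) (hκ : ∀ i, κ i = Real.log (p i) / Real.log (r i))
    (κmin κmax : ℝ)
    (hκmin : IsLeast (Set.range κ) κmin) (hκmax : IsGreatest (Set.range κ) κmax)
    (smin smax : ℝ)
    (hsmin : ∑ i ∈ Finset.univ.filter (fun i => κ i = κmin), r i ^ smin = 1)
    (hsmax : ∑ i ∈ Finset.univ.filter (fun i => κ i = κmax), r i ^ smax = 1)
    (T : ℝ → ℝ) (hT : ∀ q : ℝ, ∑ i, p i ^ q * r i ^ (-(T q)) = 1) :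
    Tendsto (fun q : ℝ => q * κmin - T q) atTop (nhds smin) ∧
    Tendsto (fun q : ℝ => q * κmax - T q) atBot (nhds smax) ∧
    (∀ i, Tendsto (fun q : ℝ => p i ^ q * r i ^ (-(T q))) atTop
      (nhds (if κ i = κmin then r i ^ smin else 0))) ∧
    (∀ i, Tendsto (fun q : ℝ => p i ^ q * r i ^ (-(T q))) atBot
      (nhds (if κ i = κmax then r i ^ smax else 0))) := by
  have hlogr : ∀ i, Real.log (r i) ≠ 0 :=
    fun i => ne_of_lt (Real.log_neg (hr i).1 (hr i).2)
  have hpi : ∀ i, p i = r i ^ κ i := by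
    intro i
    rw [hκ i, Real.rpow_def_of_pos (hr i).1, mul_comm, div_mul_cancel₀ _ (hlogr i),
      Real.exp_log (hp i)]
  have key : ∀ (c : ℝ) (i : ι) (q : ℝ),
      p i ^ q * r i ^ (-(T q)) = r i ^ (q * (κ i - c) + (q * c - T q)) := by
    intro c i q
    rw [hpi i, ← Real.rpow_mul (hr i).1.le, ← Real.rpow_add (hr i).1]
    congr 1; ring
  -- atTop part
  have hs1 : ∀ q, ∑ i, r i ^ (q * (κ i - κmin) + (q * κmin - T q)) = 1 := by
    intro q
    rw [← hT q]
    exact Finset.sum_congr rfl fun i _ => (key κmin i q).symm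
  obtain ⟨h1, h2⟩ := aux_tendsto r hr κ κmin hκmin smin hsmin
    (fun q => q * κmin - T q) hs1
  -- atBot part via q ↦ -q
  have hneg : IsLeast (Set.range (fun i => -κ i)) (-κmax) := by
    constructor
    · obtain ⟨i0, hi0⟩ := hκmax.1
      exact ⟨i0, by simp [hi0]⟩
    · rintro x ⟨i, rfl⟩
      exact neg_le_neg (hκmax.2 ⟨i, rfl⟩)
  have hsmax' : ∑ i ∈ Finset.univ.filter (fun i => -κ i = -κmax), r i ^ smax = 1 := by
    have : (Finset.univ.filter (fun i => -κ i = -κmax))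
        = Finset.univ.filter (fun i => κ i = κmax) := by
      ext i; simp
    rw [this]; exact hsmax
  have hs2 : ∀ q, ∑ i, r i ^ (q * ((-κ i) - (-κmax)) + (q * (-κmax) - T (-q))) = 1 := by
    intro q
    rw [← hT (-q)]
    refine Finset.sum_congr rfl fun i _ => ?_
    rw [key κmax i (-q)]
    congr 1; ring
  obtain ⟨h3, h4⟩ := aux_tendsto r hr (fun i => -κ i) (-κmax) hneg smax hsmax'
    (fun q => q * (-κmax) - T (-q)) hs2
  refine ⟨h1, ?_, fun i => ?_, fun i => ?_⟩
  · have := h3.comp tendsto_neg_atBot_atTop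
    simp only [Function.comp_def, neg_mul_neg, neg_neg] at this
    exact this
  · have heq : (fun q : ℝ => p i ^ q * r i ^ (-(T q)))
        = fun q : ℝ => r i ^ (q * (κ i - κmin) + (q * κmin - T q)) :=
      funext fun q => key κmin i q
    rw [heq]
    exact h2 i
  · have h := (h4 i).comp tendsto_neg_atBot_atTop
    simp only [Function.comp_def, neg_neg] at h
    have heq : (fun q : ℝ => p i ^ q * r i ^ (-(T q)))
        = fun q : ℝ => r i ^ (-q * (-κ i - -κmax) + (-q * -κmax - T q)) := by
      funext q
      rw [key κmax i q]
      congr 1; ring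
    have hif : (if κ i = κmax then r i ^ smax else 0)
        = (if -κ i = -κmax then r i ^ smax else 0) := by simp
    rw [heq, hif]
    exact h
end
end

section
/- Let Δ be a compact Hausdorff space, u : Δ → ℝ continuous, v : Δ → ℝ upper semicontinuous; set f(α) = max{v(w) : w ∈ Δ, u(w) = α} (with value −∞ if no such w exists) and τ(q) = min_{w∈Δ}(q·u(w) − v(w)). Then: (a) f(α) ≤ τ*(α) for all α ∈ ℝ; (b) if τ is supported at (q,α) for some q ∈ ℝ, then f(α) = qα − τ(q) = τ*(α); (c) the following are equivalent: (i) for all q ∈ ℝ and all α ∈ ∂τ(q), τ is supported at (q,α); (ii) f(α) = τ*(α) for all α ∈ ℝ; (iii) f is concave. -/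
/-! Every minimum defining `τ(q)` is attained (`q u − v` is lower semicontinuous on a compact
space), so `v(w) ≤ qα − τ(q)` whenever `u(w) = α`, which is `f ≤ τ*`, with equality when a
minimizer lies in the fiber over `α`. A supergradient `α ∈ ∂τ(q)` gives `τ*(α) = qα − τ(q)`, and
by Danskin's argument there are minimizers for `q` on both sides of the fiber over `α`:
interpolating between them shows `f(α) = τ*(α)` when `f` is concave. Every `α` strictly inside
the range of `u` is such a supergradient, and at or beyond the extremes of `u` the equality
`f = τ*` always holds by a nested compact sets argument. -/

open Filter Set Topology

noncomputable section

variable {Δ : Type*} [TopologicalSpace Δ]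

/-- The unconstrained dual `τ(q) = min_{w∈Δ} (q·u(w) − v(w))`. -/
def tauOpt (u v : Δ → ℝ) (q : ℝ) : ℝ :=
  sInf (Set.range fun w => q * u w - v w)

/-- The constrained optimum `f(α) = max{v(w) : u(w) = α}`, valued in `EReal`
(with value `−∞ = ⊥` if the constraint set is empty). -/
def fOpt (u v : Δ → ℝ) (α : ℝ) : EReal :=
  sSup ((fun w => ((v w : ℝ) : EReal)) '' {w | u w = α})

/-- The concave conjugate `g*(α) = inf_{q∈ℝ} (qα − g(q))`, valued in `EReal`. -/
def concConj (g : ℝ → ℝ) (α : ℝ) : EReal :=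
  ⨅ q : ℝ, ((q * α - g q : ℝ) : EReal)

/-- `τ` is supported at `(q, α)`: there is `w ∈ Δ` with `u(w) = α` and
`τ(q) = q·u(w) − v(w)`. -/
def SupportedAt (u v : Δ → ℝ) (q α : ℝ) : Prop :=
  ∃ w : Δ, u w = α ∧ tauOpt u v q = q * u w - v w

/-- `α` belongs to the subdifferential `∂τ(q)` of the concave function `τ` at `q`,
i.e. the line through `(q, τ(q))` with slope `α` lies above the graph of `τ`. -/
def InSubdiff (τ : ℝ → ℝ) (q α : ℝ) : Prop :=
  ∀ y : ℝ, τ y ≤ τ q + α * (y - q)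

theorem concConj_le (g : ℝ → ℝ) (q α : ℝ) : concConj g α ≤ ((q * α - g q : ℝ) : EReal) :=
  iInf_le _ q

theorem concConj_ne_top (g : ℝ → ℝ) (α : ℝ) : concConj g α ≠ ⊤ :=
  ne_top_of_le_ne_top (EReal.coe_ne_top _) (concConj_le g 0 α)

theorem InSubdiff.concConj_eq {g : ℝ → ℝ} {q α : ℝ} (h : InSubdiff g q α) :
    concConj g α = ((q * α - g q : ℝ) : EReal) :=
  le_antisymm (concConj_le g q α) <| le_iInf fun y => EReal.coe_le_coe_iff.2 (by linarith [h y])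

theorem concConj_concave (g : ℝ → ℝ) (a b t : ℝ) (ht : t ∈ Ioo (0 : ℝ) 1) :
    ((t : ℝ) : EReal) * concConj g a + ((1 - t : ℝ) : EReal) * concConj g b
      ≤ concConj g (t * a + (1 - t) * b) := by
  obtain ⟨ht₀, ht₁⟩ := ht
  rcases eq_or_ne (concConj g a) ⊥ with ha | ha
  · rw [ha, EReal.coe_mul_bot_of_pos ht₀, EReal.bot_add]
    exact bot_le
  rcases eq_or_ne (concConj g b) ⊥ with hb | hb
  · rw [hb, EReal.coe_mul_bot_of_pos (sub_pos.2 ht₁), EReal.add_bot]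
    exact bot_le
  lift concConj g a to ℝ using ⟨concConj_ne_top g a, ha⟩ with ra hra
  lift concConj g b to ℝ using ⟨concConj_ne_top g b, hb⟩ with rb hrb
  rw [← EReal.coe_mul, ← EReal.coe_mul, ← EReal.coe_add]
  refine le_iInf fun q => EReal.coe_le_coe_iff.2 ?_
  have hqa := EReal.coe_le_coe_iff.1 (hra ▸ concConj_le g q a)
  have hqb := EReal.coe_le_coe_iff.1 (hrb ▸ concConj_le g q b)
  linarith [mul_le_mul_of_nonneg_left hqa ht₀.le,
    mul_le_mul_of_nonneg_left hqb (sub_pos.2 ht₁).le]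

theorem lowerSemicontinuous_mul_sub {u v : Δ → ℝ} (hu : Continuous u)
    (hv : UpperSemicontinuous v) (q : ℝ) : LowerSemicontinuous fun w => q * u w - v w := by
  have hnv : LowerSemicontinuous fun w => -v w := fun x y hy => by
    filter_upwards [hv x (-y) (by linarith)] with z hz
    linarith
  simp only [sub_eq_add_neg]
  exact (continuous_const.mul hu).lowerSemicontinuous.add hnv

theorem coe_le_fOpt {X : Type*} {u v : X → ℝ} {w : X} {α : ℝ} (h : u w = α) :
    ((v w : ℝ) : EReal) ≤ fOpt u v α :=
  le_sSup ⟨w, h, rfl⟩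

section Reflection

variable {X : Type*} {u v : X → ℝ}

theorem tauOpt_neg (u v : X → ℝ) (q : ℝ) : tauOpt (-u) v q = tauOpt u v (-q) := by
  simp only [tauOpt, Pi.neg_apply, mul_neg, neg_mul]

theorem fOpt_neg (u v : X → ℝ) (α : ℝ) : fOpt (-u) v (-α) = fOpt u v α := by
  simp only [fOpt, Pi.neg_apply, neg_inj]

theorem concConj_tauOpt_neg (u v : X → ℝ) (α : ℝ) :
    concConj (tauOpt (-u) v) (-α) = concConj (tauOpt u v) α :=
  (Equiv.neg ℝ).iInf_congr fun q => by
    simp only [Equiv.neg_apply, tauOpt_neg, neg_mul, mul_neg]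

theorem InSubdiff.tauOpt_neg {q α : ℝ} (h : InSubdiff (tauOpt u v) q α) :
    InSubdiff (tauOpt (-u) v) (-q) (-α) := fun y => by
  simp only [_root_.tauOpt_neg, neg_neg]
  linarith [h (-y)]

theorem SupportedAt.of_neg {q β : ℝ} (h : SupportedAt (-u) v (-q) (-β)) : SupportedAt u v q β := by
  obtain ⟨w, hw, hτ⟩ := h
  refine ⟨w, neg_inj.1 hw, ?_⟩
  rw [tauOpt_neg, neg_neg] at hτ
  simpa only [Pi.neg_apply, neg_mul_neg] using hτ

end Reflection

section Compact

variable [CompactSpace Δ] {u v : Δ → ℝ}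

theorem exists_fOpt_eq (hu : Continuous u) (hv : UpperSemicontinuous v) {α : ℝ}
    (h : fOpt u v α ≠ ⊥) : ∃ w, u w = α ∧ fOpt u v α = v w := by
  have hne : {w | u w = α}.Nonempty := by
    refine nonempty_iff_ne_empty.2 fun hempty => h ?_
    rw [fOpt, hempty, image_empty, sSup_empty]
  obtain ⟨w, hw, hmax⟩ := (hv.upperSemicontinuousOn _).exists_isMaxOn hne
    (isClosed_eq hu continuous_const).isCompact
  refine ⟨w, hw, le_antisymm (sSup_le ?_) (coe_le_fOpt hw)⟩
  rintro _ ⟨x, hx, rfl⟩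
  exact EReal.coe_le_coe_iff.2 (hmax hx)

theorem supportedAt_of_fOpt_eq_concConj (hu : Continuous u) (hv : UpperSemicontinuous v)
    {q α : ℝ} (hf : fOpt u v α = concConj (tauOpt u v) α) (hq : InSubdiff (tauOpt u v) q α) :
    SupportedAt u v q α := by
  rw [hq.concConj_eq] at hf
  obtain ⟨w, hw, hfw⟩ := exists_fOpt_eq hu hv (hf ▸ EReal.coe_ne_bot _)
  rw [hfw, EReal.coe_eq_coe_iff] at hf
  exact ⟨w, hw, by rw [hw]; linarith⟩

variable [Nonempty Δ]

theorem isLeast_tauOpt (hu : Continuous u) (hv : UpperSemicontinuous v) (q : ℝ) :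
    IsLeast (range fun w => q * u w - v w) (tauOpt u v q) := by
  obtain ⟨w, -, hw⟩ := ((lowerSemicontinuous_mul_sub hu hv q).lowerSemicontinuousOn _).exists_isMinOn
    univ_nonempty isCompact_univ
  have hleast : IsLeast (range fun w => q * u w - v w) (q * u w - v w) :=
    ⟨mem_range_self w, forall_mem_range.2 fun x => hw (mem_univ x)⟩
  rwa [tauOpt, hleast.csInf_eq]

theorem tauOpt_le (hu : Continuous u) (hv : UpperSemicontinuous v) (q : ℝ) (w : Δ) :
    tauOpt u v q ≤ q * u w - v w :=
  (isLeast_tauOpt hu hv q).2 (mem_range_self w)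

theorem exists_tauOpt_eq (hu : Continuous u) (hv : UpperSemicontinuous v) (q : ℝ) :
    ∃ w, tauOpt u v q = q * u w - v w :=
  let ⟨w, hw⟩ := (isLeast_tauOpt hu hv q).1
  ⟨w, hw.symm⟩

theorem continuous_tauOpt (hu : Continuous u) (hv : UpperSemicontinuous v) :
    Continuous (tauOpt u v) := by
  obtain ⟨C, hC⟩ := (isCompact_range hu).isBounded.exists_norm_le
  refine (LipschitzWith.of_le_add_mul' C fun q q' => ?_).continuous
  obtain ⟨w, hw⟩ := exists_tauOpt_eq hu hv q'
  have hslope : (q - q') * u w ≤ C * dist q q' :=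
    calc (q - q') * u w ≤ |q - q'| * |u w| := abs_mul (q - q') (u w) ▸ le_abs_self _
      _ ≤ dist q q' * C := by
        rw [← Real.dist_eq, ← Real.norm_eq_abs]
        gcongr
        exact hC _ (mem_range_self w)
      _ = C * dist q q' := mul_comm _ _
  linarith [tauOpt_le hu hv q w]

theorem fOpt_le_concConj (hu : Continuous u) (hv : UpperSemicontinuous v) (α : ℝ) :
    fOpt u v α ≤ concConj (tauOpt u v) α := by
  refine sSup_le ?_
  rintro _ ⟨w, hw, rfl⟩
  refine le_iInf fun q => EReal.coe_le_coe_iff.2 ?_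
  have := tauOpt_le hu hv q w
  rw [show u w = α from hw] at this
  linarith

theorem SupportedAt.fOpt_eq (hu : Continuous u) (hv : UpperSemicontinuous v) {q α : ℝ}
    (h : SupportedAt u v q α) :
    fOpt u v α = ((q * α - tauOpt u v q : ℝ) : EReal) ∧
      fOpt u v α = concConj (tauOpt u v) α := by
  obtain ⟨w, hw, hτ⟩ := h
  have hle : ((q * α - tauOpt u v q : ℝ) : EReal) ≤ fOpt u v α := by
    rw [hτ, ← hw, show q * u w - (q * u w - v w) = v w by ring]
    exact coe_le_fOpt rfl
  have hge := (fOpt_le_concConj hu hv α).trans (concConj_le _ q α)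
  exact ⟨le_antisymm hge hle,
    le_antisymm (fOpt_le_concConj hu hv α) ((concConj_le _ q α).trans hle)⟩

/-- For `c < τ*(α)` the sets `{w | n u(w) − v(w) ≤ nα − c}` are nonempty and, as `u ≥ α`,
nested; a common point lies in the fiber over `α` and has `v ≥ c`. -/
theorem fOpt_eq_concConj_of_forall_le (hu : Continuous u) (hv : UpperSemicontinuous v) {α : ℝ}
    (hα : ∀ w, α ≤ u w) : fOpt u v α = concConj (tauOpt u v) α := by
  refine le_antisymm (fOpt_le_concConj hu hv α) (not_lt.1 fun hlt => ?_)
  obtain ⟨c, hfc, hcτ⟩ := EReal.lt_iff_exists_real_btwn.1 hlt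
  have hc : ∀ n : ℕ, c < n * α - tauOpt u v n := fun n =>
    EReal.coe_lt_coe_iff.1 (hcτ.trans_le (concConj_le _ n α))
  set K : ℕ → Set Δ := fun n => (fun w => (n : ℝ) * u w - v w) ⁻¹' Iic (n * α - c)
  obtain ⟨w, hw⟩ : (⋂ n, K n).Nonempty := by
    refine IsCompact.nonempty_iInter_of_sequence_nonempty_isCompact_isClosed K
      (fun n w hw => ?_) (fun n => ?_) (IsClosed.isCompact ?_) fun n => ?_
    · simp only [K, mem_preimage, mem_Iic, Nat.cast_succ] at hw ⊢
      linarith [hα w]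
    · obtain ⟨w, hw⟩ := exists_tauOpt_eq hu hv n
      exact ⟨w, by simp only [K, mem_preimage, mem_Iic]; linarith [hc n]⟩
    all_goals exact (lowerSemicontinuous_mul_sub hu hv _).isClosed_preimage _
  simp only [K, mem_iInter, mem_preimage, mem_Iic] at hw
  have huw : u w = α := by
    refine le_antisymm (not_lt.1 fun h => ?_) (hα w)
    obtain ⟨n, hn⟩ := exists_nat_gt ((v w - c) / (u w - α))
    rw [div_lt_iff₀ (sub_pos.2 h)] at hn
    linarith [hw n]
  have hcv : c ≤ v w := by simpa using hw 0
  exact hfc.not_ge ((EReal.coe_le_coe_iff.2 hcv).trans (coe_le_fOpt huw))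

theorem fOpt_eq_concConj_of_forall_ge (hu : Continuous u) (hv : UpperSemicontinuous v) {α : ℝ}
    (hα : ∀ w, u w ≤ α) : fOpt u v α = concConj (tauOpt u v) α := by
  have := fOpt_eq_concConj_of_forall_le hu.neg hv (α := -α) fun w => neg_le_neg (hα w)
  rwa [fOpt_neg, concConj_tauOpt_neg] at this

/-- Take `q` minimizing `q ↦ qα − τ(q)`, which is continuous and coercive. -/
theorem exists_inSubdiff (hu : Continuous u) (hv : UpperSemicontinuous v) {w₁ w₂ : Δ} {α : ℝ}
    (h₁ : u w₁ < α) (h₂ : α < u w₂) : ∃ q, InSubdiff (tauOpt u v) q α := by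
  have hbound : ∀ w q, v w + q * (α - u w) ≤ q * α - tauOpt u v q := fun w q => by
    linarith [tauOpt_le hu hv q w]
  have hcoercive : Tendsto (fun q => q * α - tauOpt u v q) (cocompact ℝ) atTop := by
    rw [cocompact_eq_atBot_atTop, tendsto_sup]
    exact ⟨tendsto_atTop_mono (hbound w₂) <| tendsto_atTop_add_const_left _ _ <|
        tendsto_id.atBot_mul_const_of_neg (sub_neg.2 h₂),
      tendsto_atTop_mono (hbound w₁) <| tendsto_atTop_add_const_left _ _ <|
        tendsto_id.atTop_mul_const (sub_pos.2 h₁)⟩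
  have hcont : Continuous fun q => q * α - tauOpt u v q :=
    (continuous_id.mul continuous_const).sub (continuous_tauOpt hu hv)
  obtain ⟨q, hq⟩ := hcont.exists_forall_le hcoercive
  exact ⟨q, fun y => by linarith [hq y]⟩

theorem fOpt_eq_concConj_of_forall_inSubdiff (hu : Continuous u) (hv : UpperSemicontinuous v)
    {α : ℝ} (h : ∀ q, InSubdiff (tauOpt u v) q α → fOpt u v α = concConj (tauOpt u v) α) :
    fOpt u v α = concConj (tauOpt u v) α := by
  by_cases hle : ∀ w, α ≤ u w
  · exact fOpt_eq_concConj_of_forall_le hu hv hle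
  by_cases hge : ∀ w, u w ≤ α
  · exact fOpt_eq_concConj_of_forall_ge hu hv hge
  simp only [not_forall, not_le] at hle hge
  obtain ⟨w₁, h₁⟩ := hle
  obtain ⟨w₂, h₂⟩ := hge
  obtain ⟨q, hq⟩ := exists_inSubdiff hu hv h₁ h₂
  exact h q hq

/-- Danskin's argument: the minimizers for `q + 1/(n+1)` stay below the supergradient line,
which makes the sets `K n` nested and nonempty; a common point is a minimizer for `q`. -/
theorem InSubdiff.exists_supportedAt_le (hu : Continuous u) (hv : UpperSemicontinuous v)
    {q α : ℝ} (hq : InSubdiff (tauOpt u v) q α) : ∃ β ≤ α, SupportedAt u v q β := by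
  set s : ℕ → ℝ := fun n => 1 / ((n : ℝ) + 1)
  have hs_pos : ∀ n, 0 < s n := fun n => by positivity
  have hs_anti : ∀ n, s (n + 1) ≤ s n := fun n => by
    simp only [s, Nat.cast_succ]
    gcongr
    linarith
  set K : ℕ → Set Δ := fun n =>
    (fun w => (q + s n) * u w - v w) ⁻¹' Iic (tauOpt u v q + s n * α)
  have hK : ∀ n w, w ∈ K n ↔ q * u w - v w + s n * (u w - α) ≤ tauOpt u v q := fun n w => by
    simp only [K, mem_preimage, mem_Iic]
    constructor <;> intro h <;> linarith
  have hK_le : ∀ n w, w ∈ K n → u w ≤ α := fun n w hw => by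
    have := (hK n w).1 hw
    nlinarith [tauOpt_le hu hv q w, hs_pos n]
  obtain ⟨w, hw⟩ : (⋂ n, K n).Nonempty := by
    refine IsCompact.nonempty_iInter_of_sequence_nonempty_isCompact_isClosed K
      (fun n w hw => ?_) (fun n => ?_) (IsClosed.isCompact ?_) fun n => ?_
    · have hmul := mul_le_mul_of_nonpos_right (hs_anti n) (sub_nonpos.2 (hK_le _ w hw))
      rw [hK] at hw ⊢
      linarith
    · obtain ⟨w, hw⟩ := exists_tauOpt_eq hu hv (q + s n)
      refine ⟨w, ?_⟩
      simp only [K, mem_preimage, mem_Iic]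
      linarith [hq (q + s n)]
    all_goals exact (lowerSemicontinuous_mul_sub hu hv _).isClosed_preimage _
  rw [mem_iInter] at hw
  refine ⟨u w, hK_le 0 w (hw 0), w, rfl, le_antisymm (tauOpt_le hu hv q w) ?_⟩
  have hlim : Tendsto (fun n => tauOpt u v q + s n * (α - u w)) atTop (𝓝 (tauOpt u v q)) := by
    simpa only [zero_mul, add_zero] using tendsto_const_nhds.add
      ((tendsto_one_div_add_atTop_nhds_zero_nat (𝕜 := ℝ)).mul_const (α - u w))
  exact ge_of_tendsto' hlim fun n => by linarith [(hK n w).1 (hw n)]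

theorem InSubdiff.exists_supportedAt_ge (hu : Continuous u) (hv : UpperSemicontinuous v)
    {q α : ℝ} (hq : InSubdiff (tauOpt u v) q α) : ∃ β ≥ α, SupportedAt u v q β := by
  obtain ⟨β, hβ, hs⟩ := hq.tauOpt_neg.exists_supportedAt_le hu.neg hv
  exact ⟨-β, le_neg.2 hβ, SupportedAt.of_neg (by rwa [neg_neg])⟩

/-- A concave `f` lies above the chord through `(β₁, f β₁)` and `(β₂, f β₂)` for the two
minimizers of Danskin's lemma, and that chord passes through `(α, τ*(α))`. -/
theorem fOpt_eq_concConj_of_concave (hu : Continuous u) (hv : UpperSemicontinuous v)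
    (hconc : ∀ a b t : ℝ, t ∈ Ioo (0 : ℝ) 1 →
      ((t : ℝ) : EReal) * fOpt u v a + ((1 - t : ℝ) : EReal) * fOpt u v b
        ≤ fOpt u v (t * a + (1 - t) * b))
    {q α : ℝ} (hq : InSubdiff (tauOpt u v) q α) : fOpt u v α = concConj (tauOpt u v) α := by
  obtain ⟨β₁, hβ₁, hs₁⟩ := hq.exists_supportedAt_le hu hv
  obtain ⟨β₂, hβ₂, hs₂⟩ := hq.exists_supportedAt_ge hu hv
  rcases hβ₁.eq_or_lt with rfl | hlt₁
  · exact (hs₁.fOpt_eq hu hv).2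
  rcases hβ₂.eq_or_lt with rfl | hlt₂
  · exact (hs₂.fOpt_eq hu hv).2
  refine le_antisymm (fOpt_le_concConj hu hv α) ?_
  set t := (β₂ - α) / (β₂ - β₁)
  have ht : t ∈ Ioo (0 : ℝ) 1 :=
    ⟨div_pos (sub_pos.2 hlt₂) (by linarith), (div_lt_one (by linarith)).2 (by linarith)⟩
  have hα : t * β₁ + (1 - t) * β₂ = α := by
    have hne : β₂ - β₁ ≠ 0 := by linarith
    simp only [t]
    field_simp
    ring
  calc concConj (tauOpt u v) α = ((q * α - tauOpt u v q : ℝ) : EReal) := hq.concConj_eq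
    _ = ((t : ℝ) : EReal) * ((q * β₁ - tauOpt u v q : ℝ) : EReal)
          + ((1 - t : ℝ) : EReal) * ((q * β₂ - tauOpt u v q : ℝ) : EReal) := by
        rw [← EReal.coe_mul, ← EReal.coe_mul, ← EReal.coe_add, ← hα]
        ring_nf
    _ = ((t : ℝ) : EReal) * fOpt u v β₁ + ((1 - t : ℝ) : EReal) * fOpt u v β₂ := by
        rw [(hs₁.fOpt_eq hu hv).1, (hs₂.fOpt_eq hu hv).1]
    _ ≤ fOpt u v α := hα ▸ hconc β₁ β₂ t ht

end Compact

theorem stmt_11_general {Δ : Type*} [TopologicalSpace Δ] [CompactSpace Δ] [Nonempty Δ]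
    (u v : Δ → ℝ) (hu : Continuous u) (hv : UpperSemicontinuous v) :
    (∀ α : ℝ, fOpt u v α ≤ concConj (tauOpt u v) α) ∧
    (∀ q α : ℝ, SupportedAt u v q α →
      fOpt u v α = ((q * α - tauOpt u v q : ℝ) : EReal) ∧
      fOpt u v α = concConj (tauOpt u v) α) ∧
    (((∀ q α : ℝ, InSubdiff (tauOpt u v) q α → SupportedAt u v q α) ↔
        (∀ α : ℝ, fOpt u v α = concConj (tauOpt u v) α)) ∧
      ((∀ α : ℝ, fOpt u v α = concConj (tauOpt u v) α) ↔
        (∀ a b t : ℝ, t ∈ Set.Ioo (0:ℝ) 1 →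
          ((t : ℝ) : EReal) * fOpt u v a + ((1 - t : ℝ) : EReal) * fOpt u v b
            ≤ fOpt u v (t * a + (1 - t) * b)))) := by
  refine ⟨fOpt_le_concConj hu hv, fun q α h => h.fOpt_eq hu hv, ⟨fun hsupp α => ?_, ?_⟩,
    ⟨fun hf a b t ht => ?_, fun hconc α => ?_⟩⟩
  · exact fOpt_eq_concConj_of_forall_inSubdiff hu hv fun q hq => ((hsupp q α hq).fOpt_eq hu hv).2
  · exact fun hf q α hq => supportedAt_of_fOpt_eq_concConj hu hv (hf α) hq
  · simpa only [hf] using concConj_concave (tauOpt u v) a b t ht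
  · exact fOpt_eq_concConj_of_forall_inSubdiff hu hv fun q hq =>
      fOpt_eq_concConj_of_concave hu hv hconc hq

/-- (a) `f ≤ τ*`; (b) if `τ` is supported at `(q,α)` then
`f(α) = qα − τ(q) = τ*(α)`; (c) the following are equivalent:
(i) `τ` is supported at `(q,α)` for every `q` and every `α ∈ ∂τ(q)`;
(ii) `f = τ*`; (iii) `f` is concave. -/
theorem stmt_11 {Δ : Type*} [TopologicalSpace Δ] [CompactSpace Δ] [T2Space Δ] [Nonempty Δ]
    (u v : Δ → ℝ) (hu : Continuous u) (hv : UpperSemicontinuous v) :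
    (∀ α : ℝ, fOpt u v α ≤ concConj (tauOpt u v) α) ∧
    (∀ q α : ℝ, SupportedAt u v q α →
      fOpt u v α = ((q * α - tauOpt u v q : ℝ) : EReal) ∧
      fOpt u v α = concConj (tauOpt u v) α) ∧
    (((∀ q α : ℝ, InSubdiff (tauOpt u v) q α → SupportedAt u v q α) ↔
        (∀ α : ℝ, fOpt u v α = concConj (tauOpt u v) α)) ∧
      ((∀ α : ℝ, fOpt u v α = concConj (tauOpt u v) α) ↔
        (∀ a b t : ℝ, t ∈ Set.Ioo (0:ℝ) 1 →
          ((t : ℝ) : EReal) * fOpt u v a + ((1 - t : ℝ) : EReal) * fOpt u v b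
            ≤ fOpt u v (t * a + (1 - t) * b)))) :=
  stmt_11_general u v hu hv
end
end

section
/- Let Δ be a compact Hausdorff space, u : Δ → ℝ continuous, v : Δ → ℝ upper semicontinuous; set f(α) = max{v(w) : w ∈ Δ, u(w) = α} (−∞ if empty) and τ(q) = min_{w∈Δ}(q·u(w) − v(w)). If q ∈ ℝ is such that the derivative α = τ'(q) exists, then f(α) = τ*(α). Moreover, τ(q) = f*(q) for all q ∈ ℝ, where f*(q) = inf_{α∈ℝ}(qα − f(α)). -/
open Filter Set Topology

noncomputable section

variable {Δ : Type*} [TopologicalSpace Δ]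

/-- A lower semicontinuous real function on a nonempty compact space attains a minimum. -/
lemma lsc_exists_min {Δ : Type*} [TopologicalSpace Δ] [CompactSpace Δ] [Nonempty Δ]
    {h : Δ → ℝ} (hh : LowerSemicontinuous h) : ∃ w₀ : Δ, ∀ w, h w₀ ≤ h w := by
  have hcl : ∀ w : Δ, IsClosed {x : Δ | h x ≤ h w} := fun w =>
    lowerSemicontinuous_iff_isClosed_preimage.1 hh (h w)
  have hnon : (⋂ w : Δ, {x : Δ | h x ≤ h w}).Nonempty := by
    apply IsCompact.nonempty_iInter_of_directed_nonempty_isCompact_isClosed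
    · intro i j
      rcases le_total (h i) (h j) with hij | hij
      · exact ⟨i, fun x hx => hx, fun x hx => le_trans hx hij⟩
      · exact ⟨j, fun x hx => le_trans hx hij, fun x hx => hx⟩
    · exact fun w => ⟨w, by simp⟩
    · exact fun w => (hcl w).isCompact
    · exact hcl
  obtain ⟨w₀, hw₀⟩ := hnon
  exact ⟨w₀, fun w => by simpa using Set.mem_iInter.1 hw₀ w⟩

/-- The minimum defining `tauOpt` is attained, and it is a lower bound. -/
lemma tau_min {Δ : Type*} [TopologicalSpace Δ] [CompactSpace Δ] [Nonempty Δ]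
    (u v : Δ → ℝ) (hu : Continuous u) (hv : UpperSemicontinuous v) (q : ℝ) :
    (∃ w₀ : Δ, tauOpt u v q = q * u w₀ - v w₀) ∧
      ∀ w : Δ, tauOpt u v q ≤ q * u w - v w := by
  have hlsc : LowerSemicontinuous fun w => q * u w - v w := by
    have h1 : LowerSemicontinuous fun w => q * u w :=
      (hu.const_smul q).lowerSemicontinuous
    have h2 : LowerSemicontinuous fun w => -v w := by
      intro x y hy
      filter_upwards [hv x (-y) (by simp only [] at hy; linarith)] with z hz
      simpa using neg_lt_neg hz
    simpa [sub_eq_add_neg] using h1.add h2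
  obtain ⟨w₀, hw₀⟩ := lsc_exists_min hlsc
  have hbdd : BddBelow (Set.range fun w => q * u w - v w) :=
    ⟨q * u w₀ - v w₀, by rintro x ⟨w, rfl⟩; exact hw₀ w⟩
  have hle : ∀ w : Δ, tauOpt u v q ≤ q * u w - v w := fun w =>
    csInf_le hbdd ⟨w, rfl⟩
  refine ⟨⟨w₀, le_antisymm (hle w₀) ?_⟩, hle⟩
  exact le_csInf (Set.range_nonempty _) (by rintro x ⟨w, rfl⟩; exact hw₀ w)

/-- Differentiability of `τ` at `q` implies `τ` is supported at `(q, τ'(q))`. -/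
lemma supported_of_hasDerivAt {Δ : Type*} [TopologicalSpace Δ] [CompactSpace Δ] [Nonempty Δ]
    (u v : Δ → ℝ) (hu : Continuous u) (hv : UpperSemicontinuous v) {q α : ℝ}
    (hd : HasDerivAt (tauOpt u v) α q) : SupportedAt u v q α := by
  obtain ⟨w₀, hw₀⟩ := (tau_min u v hu hv q).1
  refine ⟨w₀, ?_, ?_⟩
  · -- show u w₀ = α via a local max argument
    set g : ℝ → ℝ := fun y => tauOpt u v y - (y * u w₀ - v w₀) with hg
    have hgle : ∀ y, g y ≤ 0 := fun y =>
      sub_nonpos.2 ((tau_min u v hu hv y).2 w₀)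
    have hgq : g q = 0 := by simp [hg, hw₀]
    have hmax : IsLocalMax g q := by
      apply Filter.Eventually.of_forall
      intro y
      rw [hgq]
      exact hgle y
    have hgd : HasDerivAt g (α - u w₀) q :=
      hd.sub ((hasDerivAt_mul_const (u w₀)).sub_const (v w₀))
    have := hmax.hasDerivAt_eq_zero hgd
    linarith [this]
  · exact hw₀

/-- if `α = τ'(q)` exists then `f(α) = τ*(α)`; moreover `τ = f*`,
i.e. `τ(q) = inf_{α∈ℝ} (qα − f(α))` for all `q ∈ ℝ`. -/
theorem stmt_13 {Δ : Type*} [TopologicalSpace Δ] [CompactSpace Δ] [T2Space Δ] [Nonempty Δ]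
    (u v : Δ → ℝ) (hu : Continuous u) (hv : UpperSemicontinuous v) :
    (∀ q α : ℝ, HasDerivAt (tauOpt u v) α q →
      fOpt u v α = concConj (tauOpt u v) α) ∧
    (∀ q : ℝ, ((tauOpt u v q : ℝ) : EReal)
        = ⨅ α : ℝ, (((q * α : ℝ) : EReal) - fOpt u v α)) := by
  have key : ∀ q α : ℝ, fOpt u v α ≤ ((q * α - tauOpt u v q : ℝ) : EReal) := by
    intro q α
    apply sSup_le
    rintro x ⟨w, hw, rfl⟩
    rw [EReal.coe_le_coe_iff]
    have := (tau_min u v hu hv q).2 w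
    have hwα : u w = α := hw
    rw [hwα] at this
    linarith
  constructor
  · intro q α hd
    obtain ⟨w, hwα, hwτ⟩ := supported_of_hasDerivAt u v hu hv hd
    apply le_antisymm
    · exact le_iInf fun q' => key q' α
    · have h1 : concConj (tauOpt u v) α ≤ ((q * α - tauOpt u v q : ℝ) : EReal) :=
        iInf_le _ q
      have h2 : q * α - tauOpt u v q = v w := by rw [hwτ, hwα]; ring
      rw [h2] at h1
      exact h1.trans (le_sSup ⟨w, hwα, rfl⟩)
  · intro q
    obtain ⟨w₀, hw₀⟩ := (tau_min u v hu hv q).1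
    apply le_antisymm
    · apply le_iInf
      intro α
      have h1 := key q α
      calc ((tauOpt u v q : ℝ) : EReal)
          = ((q * α : ℝ) : EReal) - ((q * α - tauOpt u v q : ℝ) : EReal) := by
            rw [← EReal.coe_sub]; norm_cast; ring
        _ ≤ ((q * α : ℝ) : EReal) - fOpt u v α := EReal.sub_le_sub le_rfl h1
    · refine le_trans (iInf_le _ (u w₀)) ?_
      have h1 : ((v w₀ : ℝ) : EReal) ≤ fOpt u v (u w₀) := le_sSup ⟨w₀, rfl, rfl⟩
      calc ((q * u w₀ : ℝ) : EReal) - fOpt u v (u w₀)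
          ≤ ((q * u w₀ : ℝ) : EReal) - ((v w₀ : ℝ) : EReal) := EReal.sub_le_sub le_rfl h1
        _ = ((q * u w₀ - v w₀ : ℝ) : EReal) := by rw [← EReal.coe_sub]
        _ = ((tauOpt u v q : ℝ) : EReal) := by rw [hw₀]
end
end
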